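/- arXiv:2206.05621 — 5 statements merged into one kernel-verified Lean document; each statement's English description precedes it below -/
import Mathlib

section
/- A nonempty subset K of {1,…,m} is maximal if and only if K = I(x⁰) for some boundary point x⁰ of D. (That is, the maximal index sets of the polyhedron are exactly the sets of constraints active at boundary points.) -/
open Set
open scoped RealInnerProductSpace

/-- For the minimal representation
`D = ⋂ i, {x : ℝᵈ | x ⬝ nⁱ > bᵢ}` of a polyhedron by distinct unit vectors,
a nonempty set of indices `K` is *maximal*
(i.e. `F_K ≠ ∅` and `F_{K'} ⊊ F_K` for every `K ⊊ K'`) if and only if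
`K = I(x0) = {i | x0 ⬝ nⁱ = bᵢ}` for some boundary point `x0` of `D`. -/
theorem maximal_iff_active_index_set
    {d m : ℕ} (n : Fin m → EuclideanSpace ℝ (Fin d)) (b : Fin m → ℝ)
    (hunit : ∀ i, ‖n i‖ = 1) (hdist : Function.Injective n)
    (D : Set (EuclideanSpace ℝ (Fin d)))
    (hD : D = ⋂ i, {x | b i < ⟪x, n i⟫})
    (hmin : ∀ j, D ⊂ ⋂ (i) (_ : i ≠ j), {x | b i < ⟪x, n i⟫})
    (F : Set (Fin m) → Set (EuclideanSpace ℝ (Fin d)))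
    (hF : ∀ K, F K = {x ∈ closure D | ∀ i ∈ K, ⟪x, n i⟫ = b i})
    (K : Set (Fin m)) (hK : K.Nonempty) :
    ((F K).Nonempty ∧ ∀ K' : Set (Fin m), K ⊂ K' → F K' ⊂ F K) ↔
      ∃ x0 ∈ frontier D, K = {i | ⟪x0, n i⟫ = b i} := by
  classical
  have hcont : ∀ i : Fin m, Continuous (fun x : EuclideanSpace ℝ (Fin d) => ⟪x, n i⟫) :=
    fun i => continuous_id.inner continuous_const
  have hlin : ∀ i : Fin m, IsLinearMap ℝ (fun x : EuclideanSpace ℝ (Fin d) => ⟪x, n i⟫) :=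
    fun i => ⟨fun x y => inner_add_left x y (n i), fun c x => real_inner_smul_left x (n i) c⟩
  have hDopen : IsOpen D := by
    rw [hD]
    exact isOpen_iInter_of_finite fun i => isOpen_lt continuous_const (hcont i)
  have hconv : Convex ℝ (closure D) := by
    apply Convex.closure
    rw [hD]
    exact convex_iInter fun i => convex_halfSpace_gt (hlin i) (b i)
  have hcl : ∀ x ∈ closure D, ∀ i, b i ≤ ⟪x, n i⟫ := by
    intro x hx i
    have hsub : closure D ⊆ {x : EuclideanSpace ℝ (Fin d) | b i ≤ ⟪x, n i⟫} := by
      apply closure_minimal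
      · rw [hD]; intro y hy
        have hy' := Set.mem_iInter.1 hy i
        simp only [Set.mem_setOf_eq] at hy' ⊢
        exact le_of_lt hy'
      · exact isClosed_le continuous_const (hcont i)
    exact hsub hx
  have hfr : ∀ x ∈ closure D, (∃ i, ⟪x, n i⟫ = b i) → x ∈ frontier D := by
    rintro x hx ⟨i, hi⟩
    rw [frontier, hDopen.interior_eq]
    refine ⟨hx, fun hxD => ?_⟩
    rw [hD] at hxD
    exact absurd hi (ne_of_gt (Set.mem_iInter.1 hxD i))
  constructor
  · rintro ⟨⟨x, hxF⟩, hmax⟩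
    rw [hF] at hxF
    obtain ⟨hxcl, hxeq⟩ := hxF
    by_cases hKu : K = Set.univ
    · refine ⟨x, hfr x hxcl ⟨hK.choose, hxeq _ hK.choose_spec⟩, ?_⟩
      apply Set.Subset.antisymm
      · intro i hi; exact hxeq i hi
      · intro i _; rw [hKu]; trivial
    · -- there is some index outside K; average witnesses
      set S : Finset (Fin m) := Finset.univ.filter (fun j => j ∉ K) with hSdef
      have hSne : S.Nonempty := by
        rcases (Set.ne_univ_iff_exists_notMem K).1 hKu with ⟨j, hj⟩
        exact ⟨j, by simp [hSdef, hj]⟩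
      have hchoice : ∀ j : Fin m, ∃ y : EuclideanSpace ℝ (Fin d),
          y ∈ closure D ∧ (∀ i ∈ K, ⟪y, n i⟫ = b i) ∧ (j ∉ K → b j < ⟪y, n j⟫) := by
        intro j
        by_cases hj : j ∈ K
        · exact ⟨x, hxcl, hxeq, fun h => absurd hj h⟩
        · have hss : K ⊂ K ∪ {j} := by
            refine ⟨Set.subset_union_left, fun h => hj (h (Set.mem_union_right _ rfl))⟩
          obtain ⟨y, hyK, hyK'⟩ := Set.exists_of_ssubset (hmax _ hss)
          rw [hF] at hyK hyK'
          obtain ⟨hycl, hyeq⟩ := hyK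
          refine ⟨y, hycl, hyeq, fun _ => ?_⟩
          have hne : ⟪y, n j⟫ ≠ b j := by
            intro heq
            exact hyK' ⟨hycl, fun i hi => by
              rcases hi with hi | hi
              · exact hyeq i hi
              · rw [Set.mem_singleton_iff.1 hi]; exact heq⟩
          exact lt_of_le_of_ne (hcl y hycl j) (Ne.symm hne)
      choose g hgcl hgeq hglt using hchoice
      set N : ℝ := (S.card : ℝ) with hN
      have hNpos : 0 < N := by
        rw [hN]
        exact_mod_cast Finset.card_pos.2 hSne
      set x0 : EuclideanSpace ℝ (Fin d) := N⁻¹ • ∑ j ∈ S, g j with hx0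
      have hx0cl : x0 ∈ closure D := by
        have hrw : x0 = ∑ j ∈ S, N⁻¹ • g j := by
          rw [hx0, Finset.smul_sum]
        rw [hrw]
        refine hconv.sum_mem (fun i _ => by positivity) ?_ (fun j _ => hgcl j)
        rw [Finset.sum_const, nsmul_eq_mul]
        field_simp
        rfl
      have hinner : ∀ i, ⟪x0, n i⟫ = N⁻¹ * ∑ j ∈ S, ⟪g j, n i⟫ := by
        intro i
        rw [hx0, real_inner_smul_left, sum_inner]
      have hKeq : ∀ i ∈ K, ⟪x0, n i⟫ = b i := by
        intro i hi
        rw [hinner i]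
        have : ∑ j ∈ S, ⟪g j, n i⟫ = ∑ _j ∈ S, b i :=
          Finset.sum_congr rfl fun j _ => hgeq j i hi
        rw [this, Finset.sum_const, nsmul_eq_mul]
        field_simp
        rfl
      have hKlt : ∀ j ∉ K, b j < ⟪x0, n j⟫ := by
        intro j hj
        have hjS : j ∈ S := by simp [hSdef, hj]
        have hsum : ∑ _j ∈ S, b j < ∑ j' ∈ S, ⟪g j', n j⟫ := by
          refine Finset.sum_lt_sum (fun j' _ => hcl (g j') (hgcl j') j) ⟨j, hjS, hglt j hj⟩
        have hsum' : N * b j < ∑ j' ∈ S, ⟪g j', n j⟫ := by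
          rwa [Finset.sum_const, nsmul_eq_mul] at hsum
        rw [hinner j]
        calc b j = N⁻¹ * (N * b j) := by field_simp
        _ < N⁻¹ * ∑ j' ∈ S, ⟪g j', n j⟫ := by
            exact mul_lt_mul_of_pos_left hsum' (by positivity)
      refine ⟨x0, hfr x0 hx0cl ⟨hK.choose, hKeq _ hK.choose_spec⟩, ?_⟩
      apply Set.Subset.antisymm
      · intro i hi; exact hKeq i hi
      · intro i hi
        by_contra hiK
        exact absurd hi (ne_of_gt (hKlt i hiK))
  · rintro ⟨x0, hx0fr, rfl⟩
    have hx0cl : x0 ∈ closure D := frontier_subset_closure hx0fr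
    have hx0F : x0 ∈ F {i | ⟪x0, n i⟫ = b i} := by
      rw [hF]; exact ⟨hx0cl, fun i hi => hi⟩
    refine ⟨⟨x0, hx0F⟩, fun K' hK' => ?_⟩
    obtain ⟨j, hjK', hjK⟩ := Set.exists_of_ssubset hK'
    rw [Set.ssubset_def]
    constructor
    · rw [hF, hF]
      rintro y ⟨hycl, hyeq⟩
      exact ⟨hycl, fun i hi => hyeq i (hK'.1 hi)⟩
    · intro hsub
      have := hsub hx0F
      rw [hF] at this
      exact hjK (this.2 j hjK')
end

section
/- A nonempty proper subset K of {1,…,m} is maximal if and only if for every j ∉ K there exists a point x ∈ closure(D) such that x·nⁱ = bᵢ for all i ∈ K and x·nʲ > bⱼ. -/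
open Set
open scoped RealInnerProductSpace

/-- For the minimal representation
`D = ⋂ i, {x : ℝᵈ | x ⬝ nⁱ > bᵢ}` of a polyhedron by distinct unit vectors,
a nonempty proper subset `K` of the index set is *maximal*
(i.e. `F_K ≠ ∅` and `F_{K'} ⊊ F_K` for every `K ⊊ K'`) if and only if
for every `j ∉ K` there exists `x ∈ closure D` with `x ⬝ nⁱ = bᵢ` for all
`i ∈ K` and `x ⬝ nʲ > bⱼ`. -/
theorem maximal_iff_separating_points
    {d m : ℕ} (n : Fin m → EuclideanSpace ℝ (Fin d)) (b : Fin m → ℝ)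
    (hunit : ∀ i, ‖n i‖ = 1) (hdist : Function.Injective n)
    (D : Set (EuclideanSpace ℝ (Fin d)))
    (hD : D = ⋂ i, {x | b i < ⟪x, n i⟫})
    (hmin : ∀ j, D ⊂ ⋂ (i) (_ : i ≠ j), {x | b i < ⟪x, n i⟫})
    (F : Set (Fin m) → Set (EuclideanSpace ℝ (Fin d)))
    (hF : ∀ K, F K = {x ∈ closure D | ∀ i ∈ K, ⟪x, n i⟫ = b i})
    (K : Set (Fin m)) (hK : K.Nonempty) (hKproper : K ⊂ Set.univ) :
    ((F K).Nonempty ∧ ∀ K' : Set (Fin m), K ⊂ K' → F K' ⊂ F K) ↔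
      ∀ j ∉ K, ∃ x ∈ closure D, (∀ i ∈ K, ⟪x, n i⟫ = b i) ∧ b j < ⟪x, n j⟫ := by
  -- Every point of `closure D` satisfies the weak inequalities.
  have hcl : ∀ i, ∀ x ∈ closure D, b i ≤ ⟪x, n i⟫ := by
    intro i x hx
    have hclosed : IsClosed {x : EuclideanSpace ℝ (Fin d) | b i ≤ ⟪x, n i⟫} :=
      isClosed_le continuous_const (continuous_id.inner continuous_const)
    have hsub : D ⊆ {x : EuclideanSpace ℝ (Fin d) | b i ≤ ⟪x, n i⟫} := by
      intro y hy
      rw [hD] at hy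
      exact le_of_lt (show b i < ⟪y, n i⟫ from Set.mem_iInter.mp hy i)
    exact closure_minimal hsub hclosed hx
  constructor
  · rintro ⟨hne, hstrict⟩ j hj
    have hKK' : K ⊂ K ∪ {j} := by
      constructor
      · exact Set.subset_union_left
      · intro h
        exact hj (h (Set.mem_union_right _ rfl))
    have := hstrict (K ∪ {j}) hKK'
    obtain ⟨x, hxK, hxK'⟩ := Set.exists_of_ssubset this
    rw [hF] at hxK hxK'
    obtain ⟨hxD, hxeq⟩ := hxK
    refine ⟨x, hxD, hxeq, ?_⟩
    have hne' : ⟪x, n j⟫ ≠ b j := by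
      intro h
      exact hxK' ⟨hxD, fun i hi => hi.elim (hxeq i) (fun hij => hij ▸ h)⟩
    exact lt_of_le_of_ne (hcl j x hxD) (Ne.symm hne')
  · intro h
    constructor
    · obtain ⟨j, hjuniv, hj⟩ := Set.exists_of_ssubset hKproper
      obtain ⟨x, hxD, hxeq, _⟩ := h j hj
      exact ⟨x, by rw [hF]; exact ⟨hxD, hxeq⟩⟩
    · intro K' hKK'
      obtain ⟨j, hjK', hjK⟩ := Set.exists_of_ssubset hKK'
      obtain ⟨x, hxD, hxeq, hxgt⟩ := h j hjK
      constructor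
      · intro y hy
        rw [hF] at hy ⊢
        exact ⟨hy.1, fun i hi => hy.2 i (hKK'.1 hi)⟩
      · intro hsub
        have hx : x ∈ F K := by rw [hF]; exact ⟨hxD, hxeq⟩
        have hx' := hsub hx
        rw [hF] at hx'
        exact absurd (hx'.2 j hjK') (ne_of_gt hxgt)
end

section
/- For every boundary point x⁰ of D, the set of active indices I(x⁰) satisfies 1 ≤ |I(x⁰)| ≤ 2. (In dimension 2, a minimal representation of a bounded polygon has at most two constraints active at any boundary point; equivalently, every such polyhedron is simple.) -/
open Set
open scoped RealInnerProductSpace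

private lemma fin3_third : ∀ a b c r : Fin 3, a ≠ b → c ≠ a → c ≠ b → r ≠ c →
    (r = a ∨ r = b) := by decide

private lemma signs {g a : Fin 3 → ℝ} (ha : ∀ t, 0 < a t)
    (hsum : ∑ t, g t * a t = 0) (hg : ∃ t, g t ≠ 0) :
    ∃ (s : ℝ) (p : Fin 3), s ^ 2 = 1 ∧ s * g p < 0 ∧ ∀ q ≠ p, 0 ≤ s * g q := by
  have hneg : ∃ t, g t < 0 := by
    by_contra h
    push_neg at h
    obtain ⟨t0, ht0⟩ := hg
    have hterm : ∀ t ∈ Finset.univ, 0 ≤ g t * a t :=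
      fun t _ => mul_nonneg (h t) (ha t).le
    have := (Finset.sum_eq_zero_iff_of_nonneg hterm).mp hsum t0 (Finset.mem_univ _)
    rcases mul_eq_zero.mp this with h1 | h1
    · exact ht0 h1
    · exact (ha t0).ne' h1
  have hpos : ∃ t, 0 < g t := by
    by_contra h
    push_neg at h
    obtain ⟨t0, ht0⟩ := hg
    have hterm : ∀ t ∈ Finset.univ, 0 ≤ (-g t) * a t :=
      fun t _ => mul_nonneg (by linarith [h t]) (ha t).le
    have hsum' : ∑ t, (-g t) * a t = 0 := by
      have : ∑ t, (-g t) * a t = -∑ t, g t * a t := by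
        rw [← Finset.sum_neg_distrib]
        exact Finset.sum_congr rfl fun t _ => (neg_mul _ _)
      rw [this, hsum, neg_zero]
    have := (Finset.sum_eq_zero_iff_of_nonneg hterm).mp hsum' t0 (Finset.mem_univ _)
    rcases mul_eq_zero.mp this with h1 | h1
    · exact ht0 (by linarith)
    · exact (ha t0).ne' h1
  obtain ⟨tn, htn⟩ := hneg
  obtain ⟨tp, htp⟩ := hpos
  by_cases hcase : ∀ q ≠ tn, 0 ≤ g q
  · exact ⟨1, tn, by norm_num, by linarith, fun q hq => by simpa using hcase q hq⟩
  · push_neg at hcase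
    obtain ⟨q0, hq0ne, hq0⟩ := hcase
    have htpn : tp ≠ tn := fun h => by rw [h] at htp; linarith
    have htpq : tp ≠ q0 := fun h => by rw [h] at htp; linarith
    refine ⟨-1, tp, by norm_num, by simpa using htp, fun r hr => ?_⟩
    rcases fin3_third tn q0 tp r (Ne.symm hq0ne) htpn htpq hr with h | h
    · rw [h]; simpa using htn.le
    · rw [h]; simpa using hq0.le

private lemma comb (u : Fin 3 → EuclideanSpace ℝ (Fin 2))
    (v : EuclideanSpace ℝ (Fin 2)) (hv : ∀ t, 0 < ⟪v, u t⟫) :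
    ∃ (p : Fin 3) (c : Fin 3 → ℝ), (∀ q, 0 ≤ c q) ∧ c p = 0 ∧
      u p = ∑ q, c q • u q := by
  have hnli : ¬ LinearIndependent ℝ u := by
    intro h
    have := h.fintype_card_le_finrank
    rw [finrank_euclideanSpace_fin] at this
    simp at this
  obtain ⟨g, hg0, hgne⟩ := Fintype.not_linearIndependent_iff.mp hnli
  have hsum : ∑ t, g t * ⟪v, u t⟫ = 0 := by
    calc ∑ t, g t * ⟪v, u t⟫ = ⟪v, ∑ t, g t • u t⟫ := by
          rw [inner_sum]
          exact Finset.sum_congr rfl fun t _ => (real_inner_smul_right _ _ _).symm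
      _ = 0 := by rw [hg0, inner_zero_right]
  obtain ⟨s, p, hs2, hp, hq⟩ := signs hv hsum hgne
  have hspne : (0:ℝ) < -(s * g p) := by linarith
  refine ⟨p, fun q => if q = p then 0 else (s * g q) / (-(s * g p)), ?_, by simp, ?_⟩
  · intro q
    by_cases h : q = p
    · simp [h]
    · simp only [h, if_false]
      exact div_nonneg (hq q h) hspne.le
  · have hsg0 : ∑ t, (s * g t) • u t = 0 := by
      have h1 : s • (∑ t, g t • u t) = (0 : EuclideanSpace ℝ (Fin 2)) := by
        rw [hg0, smul_zero]
      rw [Finset.smul_sum] at h1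
      simpa [smul_smul] using h1
    have hsplit : (s * g p) • u p + ∑ q ∈ Finset.univ.erase p, (s * g q) • u q = 0 :=
      (Finset.add_sum_erase Finset.univ (fun t => (s * g t) • u t)
        (Finset.mem_univ p)).trans hsg0
    have herase : ∑ q ∈ Finset.univ.erase p, (s * g q) • u q = (-(s * g p)) • u p := by
      rw [neg_smul]
      exact eq_neg_of_add_eq_zero_right hsplit
    have hformula : (∑ q, (if q = p then (0:ℝ) else (s * g q) / (-(s * g p))) • u q)
        = (-(s * g p))⁻¹ • ∑ q ∈ Finset.univ.erase p, (s * g q) • u q := by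
      rw [← Finset.add_sum_erase Finset.univ
          (fun q => (if q = p then (0:ℝ) else (s * g q) / (-(s * g p))) • u q)
          (Finset.mem_univ p)]
      rw [if_pos rfl, zero_smul, zero_add, Finset.smul_sum]
      exact Finset.sum_congr rfl fun q hqmem => by
        rw [if_neg (Finset.ne_of_mem_erase hqmem), smul_smul, div_eq_inv_mul]
    rw [hformula, herase, smul_smul, inv_mul_cancel₀ hspne.ne', one_smul]

/-- For a nonempty bounded polygon `D ⊆ ℝ²` given by a
minimal representation `D = ⋂ i, {x | x ⬝ nⁱ > bᵢ}` with distinct unit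
normals, at every boundary point `x0` the set of active indices
`I(x0) = {i | x0 ⬝ nⁱ = bᵢ}` satisfies `1 ≤ |I(x0)| ≤ 2`. -/
theorem active_set_card_le_two
    {m : ℕ} (n : Fin m → EuclideanSpace ℝ (Fin 2)) (b : Fin m → ℝ)
    (hunit : ∀ i, ‖n i‖ = 1) (hdist : Function.Injective n)
    (D : Set (EuclideanSpace ℝ (Fin 2)))
    (hD : D = ⋂ i, {x | b i < ⟪x, n i⟫})
    (hne : D.Nonempty) (hbdd : Bornology.IsBounded D)
    (hmin : ∀ j, D ⊂ ⋂ (i) (_ : i ≠ j), {x | b i < ⟪x, n i⟫}) :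
    ∀ x0 ∈ frontier D,
      1 ≤ {i | ⟪x0, n i⟫ = b i}.ncard ∧ {i | ⟪x0, n i⟫ = b i}.ncard ≤ 2 := by
  have hcont : ∀ i, Continuous fun x : EuclideanSpace ℝ (Fin 2) => (inner ℝ x (n i) : ℝ) :=
    fun i => Continuous.inner continuous_id continuous_const
  have hopen : IsOpen D := by
    rw [hD]
    exact isOpen_iInter_of_finite fun i => isOpen_lt continuous_const (hcont i)
  intro x0 hx0
  have hxcl : x0 ∈ closure D := hx0.1
  have hxD : x0 ∉ D := fun h => hx0.2 (by rwa [hopen.interior_eq])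
  have hle : ∀ i, b i ≤ ⟪x0, n i⟫ := by
    intro i
    have hclosed : IsClosed {x : EuclideanSpace ℝ (Fin 2) | b i ≤ ⟪x, n i⟫} :=
      isClosed_le continuous_const (hcont i)
    have hDsub : D ⊆ {x : EuclideanSpace ℝ (Fin 2) | b i ≤ ⟪x, n i⟫} := by
      rw [hD]
      intro x hx
      show b i ≤ ⟪x, n i⟫
      exact le_of_lt (mem_iInter.mp hx i)
    exact hclosed.closure_subset_iff.mpr hDsub hxcl
  have hSne : {i | ⟪x0, n i⟫ = b i}.Nonempty := by
    by_contra h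
    rw [Set.not_nonempty_iff_eq_empty] at h
    apply hxD
    rw [hD]
    refine mem_iInter.mpr fun i => ?_
    refine lt_of_le_of_ne (hle i) fun heq => ?_
    have hmem : i ∈ {i | ⟪x0, n i⟫ = b i} := heq.symm
    rw [h] at hmem
    exact hmem
  constructor
  · exact (Set.ncard_pos).mpr hSne
  · by_contra h
    push_neg at h
    obtain ⟨i, hi, j, hj, k, hk, hij, hik, hjk⟩ := (Set.two_lt_ncard).mp h
    obtain ⟨y, hy⟩ := hne
    have hyD : ∀ i', b i' < ⟪y, n i'⟫ := by
      rw [hD] at hy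
      exact fun i' => mem_iInter.mp hy i'
    obtain ⟨ι, hι0, hι1, hι2⟩ : ∃ ι : Fin 3 → Fin m, ι 0 = i ∧ ι 1 = j ∧ ι 2 = k :=
      ⟨![i, j, k], rfl, rfl, rfl⟩
    have hi' : ⟪x0, n i⟫ = b i := hi
    have hj' : ⟪x0, n j⟫ = b j := hj
    have hk' : ⟪x0, n k⟫ = b k := hk
    have e0 : ⟪x0, n (ι 0)⟫ = b (ι 0) := by rw [hι0]; exact hi'
    have e1 : ⟪x0, n (ι 1)⟫ = b (ι 1) := by rw [hι1]; exact hj'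
    have e2 : ⟪x0, n (ι 2)⟫ = b (ι 2) := by rw [hι2]; exact hk'
    have hact : ∀ q, ⟪x0, n (ι q)⟫ = b (ι q) := by
      intro q
      fin_cases q
      · exact e0
      · exact e1
      · exact e2
    have hιinj : Function.Injective ι := by
      intro a b' hab
      fin_cases a <;> fin_cases b'
      · rfl
      · exact absurd ((hι0.symm.trans hab).trans hι1) hij
      · exact absurd ((hι0.symm.trans hab).trans hι2) hik
      · exact absurd ((hι1.symm.trans hab).trans hι0) (Ne.symm hij)
      · rfl
      · exact absurd ((hι1.symm.trans hab).trans hι2) hjk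
      · exact absurd ((hι2.symm.trans hab).trans hι0) (Ne.symm hik)
      · exact absurd ((hι2.symm.trans hab).trans hι1) (Ne.symm hjk)
      · rfl
    have hv : ∀ q, 0 < ⟪y - x0, n (ι q)⟫ := by
      intro q
      rw [inner_sub_left, hact q]
      linarith [hyD (ι q)]
    obtain ⟨p, c, hc0, hcp, hup⟩ := comb (fun q => n (ι q)) (y - x0) hv
    have hup' : n (ι p) = ∑ q, c q • n (ι q) := hup
    obtain ⟨x, hx1, hx2⟩ := exists_of_ssubset (hmin (ι p))
    have hx1' : ∀ i', i' ≠ ι p → b i' < ⟪x, n i'⟫ := by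
      intro i' hi'2
      exact mem_iInter.mp (mem_iInter.mp hx1 i') hi'2
    have hxP : ⟪x, n (ι p)⟫ ≤ b (ι p) := by
      by_contra h'
      push_neg at h'
      apply hx2
      rw [hD]
      refine mem_iInter.mpr fun i' => ?_
      by_cases hip : i' = ι p
      · rw [hip]; exact h'
      · exact hx1' i' hip
    have hcq : ∃ q, 0 < c q := by
      by_contra h'
      push_neg at h'
      have hc : ∀ q, c q = 0 := fun q => le_antisymm (h' q) (hc0 q)
      have hzero : n (ι p) = 0 := by
        rw [hup']
        simp [hc]
      have h1 := hunit (ι p)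
      rw [hzero, norm_zero] at h1
      norm_num at h1
    obtain ⟨q0, hq0⟩ := hcq
    have hq0p : q0 ≠ p := fun h' => by rw [h', hcp] at hq0; linarith
    have hbP : b (ι p) = ∑ q, c q * b (ι q) := by
      rw [← hact p, hup', inner_sum]
      refine Finset.sum_congr rfl fun q _ => ?_
      rw [real_inner_smul_right, hact q]
    have hlt : b (ι p) < ⟪x, n (ι p)⟫ := by
      have hsum_lt : ∑ q, c q * b (ι q) < ∑ q, c q * ⟪x, n (ι q)⟫ := by
        refine Finset.sum_lt_sum (fun q _ => ?_) ⟨q0, Finset.mem_univ _, ?_⟩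
        · by_cases hqp : q = p
          · rw [hqp, hcp]; simp
          · exact mul_le_mul_of_nonneg_left
              (le_of_lt (hx1' (ι q) (fun h' => hqp (hιinj h')))) (hc0 q)
        · exact mul_lt_mul_of_pos_left
            (hx1' (ι q0) (fun h' => hq0p (hιinj h'))) hq0
      calc b (ι p) = ∑ q, c q * b (ι q) := hbP
        _ < ∑ q, c q * ⟪x, n (ι q)⟫ := hsum_lt
        _ = ⟪x, n (ι p)⟫ := by
            rw [hup', inner_sum]
            refine Finset.sum_congr rfl fun q _ => ?_
            rw [real_inner_smul_right]
    linarith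
end

section
/- Let n¹, n², g¹, g² be unit vectors in ℝ² with g¹·n¹ > 0 and g²·n² > 0. Suppose there exists a unit vector e of the form e = η₁n¹ + η₂n² with η₁, η₂ ≥ 0 such that e·g > 0 for every nonzero vector g of the form g = c₁g¹ + c₂g² with c₁, c₂ ≥ 0. Then there exist strictly positive reals c₁, c₂ > 0 such that the vector g := c₁g¹ + c₂g² satisfies g·n¹ > 0 and g·n² > 0. -/
open scoped RealInnerProductSpace

private lemma aux_real (A B a b : ℝ) (hA : 0 < A) (hB : 0 < B)
    (hd : a ≤ 0 → b ≤ 0 → a * b < A * B) :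
    ∃ c1 c2 : ℝ, 0 < c1 ∧ 0 < c2 ∧ 0 < c1 * A + c2 * b ∧ 0 < c1 * a + c2 * B := by
  rcases le_or_gt a 0 with ha | ha
  · rcases le_or_gt b 0 with hb | hb
    · have hdet := hd ha hb
      exact ⟨B - b, A - a, by linarith, by linarith, by nlinarith, by nlinarith⟩
    · -- a ≤ 0, b > 0 : take c1 small
      have h1 : 0 < 1 - a := by linarith
      refine ⟨B / (2 * (1 - a)), 1, by positivity, one_pos, by positivity, ?_⟩
      have hh : B / (2 * (1 - a)) * a + 1 * B = B * (2 - a) / (2 * (1 - a)) := by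
        field_simp; ring
      rw [hh]
      exact div_pos (by nlinarith) (by linarith)
  · rcases le_or_gt b 0 with hb | hb
    · have h1 : 0 < 1 - b := by linarith
      refine ⟨1, A / (2 * (1 - b)), one_pos, by positivity, ?_, by positivity⟩
      have hh : 1 * A + A / (2 * (1 - b)) * b = A * (2 - b) / (2 * (1 - b)) := by
        field_simp; ring
      rw [hh]
      exact div_pos (by nlinarith) (by linarith)
    · exact ⟨1, 1, one_pos, one_pos, by nlinarith, by nlinarith⟩

/-- Let `n1, n2, g1, g2` be unit vectors in `ℝ²` with
`g1 ⬝ n1 > 0` and `g2 ⬝ n2 > 0`. If there is a unit vector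
`e = η1 n1 + η2 n2`, `η1, η2 ≥ 0`, with `e ⬝ g > 0` for every nonzero
`g = c1 g1 + c2 g2`, `c1, c2 ≥ 0`, then there are `c1, c2 > 0` such that
`g := c1 g1 + c2 g2` satisfies `g ⬝ n1 > 0` and `g ⬝ n2 > 0`. -/
theorem exists_positive_combination_of_conditionG
    (n1 n2 g1 g2 : EuclideanSpace ℝ (Fin 2))
    (hn1 : ‖n1‖ = 1) (hn2 : ‖n2‖ = 1) (hg1 : ‖g1‖ = 1) (hg2 : ‖g2‖ = 1)
    (hg1n1 : 0 < ⟪g1, n1⟫) (hg2n2 : 0 < ⟪g2, n2⟫)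
    (he : ∃ (e : EuclideanSpace ℝ (Fin 2)) (η1 η2 : ℝ), ‖e‖ = 1 ∧
      0 ≤ η1 ∧ 0 ≤ η2 ∧ e = η1 • n1 + η2 • n2 ∧
      ∀ c1 c2 : ℝ, 0 ≤ c1 → 0 ≤ c2 → c1 • g1 + c2 • g2 ≠ 0 →
        0 < ⟪e, c1 • g1 + c2 • g2⟫) :
    ∃ c1 c2 : ℝ, 0 < c1 ∧ 0 < c2 ∧
      0 < ⟪c1 • g1 + c2 • g2, n1⟫ ∧ 0 < ⟪c1 • g1 + c2 • g2, n2⟫ := by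
  obtain ⟨e, η1, η2, hne, hη1, hη2, heq, hpos⟩ := he
  have expand : ∀ (c1 c2 : ℝ) (n : EuclideanSpace ℝ (Fin 2)),
      ⟪c1 • g1 + c2 • g2, n⟫ = c1 * ⟪g1, n⟫ + c2 * ⟪g2, n⟫ := by
    intro c1 c2 n
    simp only [inner_add_left, real_inner_smul_left]
  have hg1ne : g1 ≠ 0 := fun h => by simp [h] at hg1
  have hg2ne : g2 ≠ 0 := fun h => by simp [h] at hg2
  have hd : ⟪g1, n2⟫ ≤ 0 → ⟪g2, n1⟫ ≤ 0 →
      ⟪g1, n2⟫ * ⟪g2, n1⟫ < ⟪g1, n1⟫ * ⟪g2, n2⟫ := by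
    intro ha hb
    have he1 : 0 < η1 * ⟪g1, n1⟫ + η2 * ⟪g1, n2⟫ := by
      have h := hpos 1 0 zero_le_one le_rfl (by simpa using hg1ne)
      rw [heq] at h
      have hh : ⟪η1 • n1 + η2 • n2, (1:ℝ) • g1 + (0:ℝ) • g2⟫
          = η1 * ⟪g1, n1⟫ + η2 * ⟪g1, n2⟫ := by
        simp only [inner_add_left, inner_add_right, real_inner_smul_left,
          real_inner_smul_right, real_inner_comm g1 n1, real_inner_comm g1 n2,
          one_smul, zero_smul, add_zero]
      linarith [hh ▸ h]
    have he2 : 0 < η1 * ⟪g2, n1⟫ + η2 * ⟪g2, n2⟫ := by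
      have h := hpos 0 1 le_rfl zero_le_one (by simpa using hg2ne)
      rw [heq] at h
      have hh : ⟪η1 • n1 + η2 • n2, (0:ℝ) • g1 + (1:ℝ) • g2⟫
          = η1 * ⟪g2, n1⟫ + η2 * ⟪g2, n2⟫ := by
        simp only [inner_add_left, inner_add_right, real_inner_smul_left,
          real_inner_smul_right, real_inner_comm g2 n1, real_inner_comm g2 n2,
          one_smul, zero_smul, zero_add]
      linarith [hh ▸ h]
    have hη1p : 0 < η1 := by nlinarith
    have hη2p : 0 < η2 := by nlinarith
    have hx : η2 * (-⟪g1, n2⟫) < η1 * ⟪g1, n1⟫ := by linarith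
    have hy : η1 * (-⟪g2, n1⟫) < η2 * ⟪g2, n2⟫ := by linarith
    have hx0 : 0 ≤ η2 * (-⟪g1, n2⟫) := by nlinarith
    have hy0 : 0 ≤ η1 * (-⟪g2, n1⟫) := by nlinarith
    have key := mul_lt_mul'' hx hy hx0 hy0
    nlinarith [mul_pos hη1p hη2p]
  obtain ⟨c1, c2, hc1, hc2, h1, h2⟩ :=
    aux_real ⟪g1, n1⟫ ⟪g2, n2⟫ ⟪g1, n2⟫ ⟪g2, n1⟫ hg1n1 hg2n2 hd
  exact ⟨c1, c2, hc1, hc2, by rw [expand]; linarith, by rw [expand]; linarith⟩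
end

section
/- Let n¹, n², g¹, g² be unit vectors in ℝ² with n¹ ≠ −n², g¹·n¹ > 0 and g²·n² > 0. Suppose there exists a unit vector e of the form e = η₁n¹ + η₂n² with η₁, η₂ ≥ 0 such that e·g > 0 for every nonzero vector g of the form g = c₁g¹ + c₂g² with c₁, c₂ ≥ 0. Then for every vector n = η₁n¹ + η₂n² with η₁, η₂ ≥ 0 and η₁ + η₂ > 0, one has n·g¹ > 0 or n·g² > 0. -/
open scoped RealInnerProductSpace

/-- Let `n1, n2, g1, g2` be unit vectors in `ℝ²` with
`n1 ≠ -n2`, `g1 ⬝ n1 > 0` and `g2 ⬝ n2 > 0`. If there is a unit vector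
`e = η1 n1 + η2 n2`, `η1, η2 ≥ 0`, with `e ⬝ g > 0` for every nonzero
`g = c1 g1 + c2 g2`, `c1, c2 ≥ 0`, then every `n = η1 n1 + η2 n2` with
`η1, η2 ≥ 0`, `η1 + η2 > 0`, satisfies `n ⬝ g1 > 0` or `n ⬝ g2 > 0`. -/
theorem normal_combination_positive_on_some_direction
    (n1 n2 g1 g2 : EuclideanSpace ℝ (Fin 2))
    (hn1 : ‖n1‖ = 1) (hn2 : ‖n2‖ = 1) (hg1 : ‖g1‖ = 1) (hg2 : ‖g2‖ = 1)
    (hcone : n1 ≠ -n2)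
    (hg1n1 : 0 < ⟪g1, n1⟫) (hg2n2 : 0 < ⟪g2, n2⟫)
    (he : ∃ (e : EuclideanSpace ℝ (Fin 2)) (η1 η2 : ℝ), ‖e‖ = 1 ∧
      0 ≤ η1 ∧ 0 ≤ η2 ∧ e = η1 • n1 + η2 • n2 ∧
      ∀ c1 c2 : ℝ, 0 ≤ c1 → 0 ≤ c2 → c1 • g1 + c2 • g2 ≠ 0 →
        0 < ⟪e, c1 • g1 + c2 • g2⟫) :
    ∀ η1 η2 : ℝ, 0 ≤ η1 → 0 ≤ η2 → 0 < η1 + η2 →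
      0 < ⟪η1 • n1 + η2 • n2, g1⟫ ∨ 0 < ⟪η1 • n1 + η2 • n2, g2⟫ := by
  intro η1 η2 hη1 hη2 hsum
  obtain ⟨e, ζ1, ζ2, _, hζ1, hζ2, hee, hpos⟩ := he
  have hg1ne : g1 ≠ 0 := by intro h; rw [h, norm_zero] at hg1; norm_num at hg1
  have hg2ne : g2 ≠ 0 := by intro h; rw [h, norm_zero] at hg2; norm_num at hg2
  have heg1 : 0 < ⟪e, g1⟫ := by
    have := hpos 1 0 zero_le_one le_rfl (by simpa using hg1ne)
    simpa using this
  have heg2 : 0 < ⟪e, g2⟫ := by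
    have := hpos 0 1 le_rfl zero_le_one (by simpa using hg2ne)
    simpa using this
  set a := ⟪n1, g1⟫ with ha
  set b := ⟪n2, g1⟫ with hb
  set c := ⟪n1, g2⟫ with hc
  set d := ⟪n2, g2⟫ with hd
  have ha' : 0 < a := by rw [ha, real_inner_comm]; exact hg1n1
  have hd' : 0 < d := by rw [hd, real_inner_comm]; exact hg2n2
  have expand : ∀ (s t : ℝ) (g : EuclideanSpace ℝ (Fin 2)),
      ⟪s • n1 + t • n2, g⟫ = s * ⟪n1, g⟫ + t * ⟪n2, g⟫ := by
    intro s t g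
    rw [inner_add_left, real_inner_smul_left, real_inner_smul_left]
  have hE1 : 0 < ζ1 * a + ζ2 * b := by rw [hee] at heg1; rwa [expand] at heg1
  have hE2 : 0 < ζ1 * c + ζ2 * d := by rw [hee] at heg2; rwa [expand] at heg2
  rw [expand, expand]
  by_contra h
  push_neg at h
  obtain ⟨h1, h2⟩ := h
  rcases hη1.eq_or_lt with rfl | hη1'
  · simp only [zero_mul, zero_add] at h2
    have : 0 < η2 := by linarith
    nlinarith
  rcases hη2.eq_or_lt with rfl | hη2'
  · simp only [zero_mul, add_zero] at h1
    nlinarith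
  have hb' : b < 0 := by nlinarith
  have hc' : c < 0 := by nlinarith
  have t1 : ζ1 * (η1 * a + η2 * b) ≤ 0 := mul_nonpos_of_nonneg_of_nonpos hζ1 h1
  have t2 : 0 < η1 * (ζ1 * a + ζ2 * b) := mul_pos hη1' hE1
  have t3 : 0 < (η1 * ζ2 - ζ1 * η2) * b := by
    have hring : (η1 * ζ2 - ζ1 * η2) * b = η1 * (ζ1 * a + ζ2 * b) - ζ1 * (η1 * a + η2 * b) := by
      ring
    rw [hring]; linarith
  have k1 : ζ1 * η2 > η1 * ζ2 := by
    rcases mul_pos_iff.1 t3 with ⟨hx, hy⟩ | ⟨hx, _⟩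
    · exact absurd hy (not_lt.2 hb'.le)
    · linarith
  have t4 : ζ2 * (η1 * c + η2 * d) ≤ 0 := mul_nonpos_of_nonneg_of_nonpos hζ2 h2
  have t5 : 0 < η2 * (ζ1 * c + ζ2 * d) := mul_pos hη2' hE2
  have t6 : 0 < (η2 * ζ1 - ζ2 * η1) * c := by
    have hring : (η2 * ζ1 - ζ2 * η1) * c = η2 * (ζ1 * c + ζ2 * d) - ζ2 * (η1 * c + η2 * d) := by
      ring
    rw [hring]; linarith
  have k2 : ζ1 * η2 < η1 * ζ2 := by
    rcases mul_pos_iff.1 t6 with ⟨hx, hy⟩ | ⟨hx, _⟩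
    · exact absurd hy (not_lt.2 hc'.le)
    · linarith
  linarith
end
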